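/- The problem minimize Σ_m b_m² subject to (√D/K) Σ_m |K_m v_m − c_m b_m| ≤ R and 0 ≤ b_m ≤ √P_0 has the same optimal value as the problem minimize Σ_m b_m² subject to (√D/K) Σ_m (K_m v_m − c_m b_m) ≤ R and 0 ≤ b_m ≤ min{√P_0, K_m v_m / c_m}. -/

import Mathlib

/-!
Every point of the second feasible set is feasible for the first, since `b_m ≤ K_m v_m / c_m`
makes each `K_m v_m - c_m b_m` nonnegative. Conversely, clipping a point `b` of the first set to
`min (b_m, K_m v_m / c_m)` keeps it feasible for the second problem (each residual becomes
`max (K_m v_m - c_m b_m, 0) ≤ |K_m v_m - c_m b_m|`) and does not increase `∑ b_m²`.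
-/

open Finset

theorem csInf_image_eq_of_subset_of_forall_exists_le {α β : Type*}
    [ConditionallyCompleteLattice β] {f : α → β} {S T : Set α}
    (hbdd : BddBelow (f '' S)) (hT : T.Nonempty) (hTS : T ⊆ S)
    (h : ∀ x ∈ S, ∃ y ∈ T, f y ≤ f x) :
    sInf (f '' S) = sInf (f '' T) := by
  apply le_antisymm (csInf_le_csInf hbdd (hT.image f) (Set.image_mono hTS))
  refine le_csInf ((hT.mono hTS).image f) ?_
  rintro _ ⟨x, hx, rfl⟩
  obtain ⟨y, hy, hyx⟩ := h x hx
  exact (csInf_le (hbdd.mono (Set.image_mono hTS)) ⟨y, hy, rfl⟩).trans hyx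

section Residual

variable {a b c : ℝ}

theorem abs_sub_mul_of_le_div (hc : 0 < c) (h : b ≤ a / c) : |a - c * b| = a - c * b := by
  rw [le_div_iff₀ hc] at h
  exact abs_of_nonneg (by linarith)

theorem sub_mul_min_div_le_abs (hc : 0 < c) : a - c * min b (a / c) ≤ |a - c * b| := by
  rcases le_total b (a / c) with h | h
  · rw [min_eq_left h]
    exact le_abs_self _
  · rw [min_eq_right h, mul_div_cancel₀ _ hc.ne', sub_self]
    exact abs_nonneg _

end Residual

theorem stmt_6_general {M : ℕ}
    (D K R P0 : ℝ) (hK : 0 < K)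
    (Km v c : Fin M → ℝ) (hKm : ∀ m, 0 < Km m) (hv : ∀ m, 0 < v m) (hc : ∀ m, 0 < c m)
    (S1 S2 : Set (Fin M → ℝ))
    (hS1 : S1 = {b | Real.sqrt D / K * ∑ m, |Km m * v m - c m * b m| ≤ R ∧
        ∀ m, 0 ≤ b m ∧ b m ≤ Real.sqrt P0})
    (hS2 : S2 = {b | Real.sqrt D / K * ∑ m, (Km m * v m - c m * b m) ≤ R ∧
        ∀ m, 0 ≤ b m ∧ b m ≤ min (Real.sqrt P0) (Km m * v m / c m)})
    (hne2 : S2.Nonempty) :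
    sInf ((fun b : Fin M → ℝ => ∑ m, (b m) ^ 2) '' S1) =
      sInf ((fun b : Fin M → ℝ => ∑ m, (b m) ^ 2) '' S2) := by
  subst hS1 hS2
  have hcoef : 0 ≤ Real.sqrt D / K := div_nonneg (Real.sqrt_nonneg D) hK.le
  have hcap : ∀ m, 0 ≤ Km m * v m / c m := fun m =>
    div_nonneg (mul_nonneg (hKm m).le (hv m).le) (hc m).le
  refine csInf_image_eq_of_subset_of_forall_exists_le
    ⟨0, ?_⟩ hne2 ?feasible ?clip
  · rintro _ ⟨b, -, rfl⟩
    exact sum_nonneg fun m _ => sq_nonneg _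
  case feasible =>
    rintro b ⟨hsum, hb⟩
    refine ⟨?_, fun m => ⟨(hb m).1, (hb m).2.trans (min_le_left _ _)⟩⟩
    rwa [sum_congr rfl fun m _ => abs_sub_mul_of_le_div (hc m) ((hb m).2.trans (min_le_right _ _))]
  case clip =>
    rintro b ⟨hsum, hb⟩
    refine ⟨fun m => min (b m) (Km m * v m / c m), ⟨?_, fun m => ?_⟩, ?_⟩
    · refine le_trans (mul_le_mul_of_nonneg_left ?_ hcoef) hsum
      exact sum_le_sum fun m _ => sub_mul_min_div_le_abs (hc m)
    · exact ⟨le_min (hb m).1 (hcap m), min_le_min_right _ (hb m).2⟩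
    · exact sum_le_sum fun m _ =>
        pow_le_pow_left₀ (le_min (hb m).1 (hcap m)) (min_le_left _ _) 2

/-- Proposition 4: the transmit-magnitude problem with absolute values has the same optimal
value as the convex QP obtained by removing the absolute values and restricting
`b_m ≤ min{√P₀, K_m v_m / c_m}`. -/
theorem stmt_6 {M : ℕ}
    (D K R P0 : ℝ) (hD : 0 < D) (hK : 0 < K) (hR : 0 ≤ R) (hP0 : 0 < P0)
    (Km v c : Fin M → ℝ) (hKm : ∀ m, 0 < Km m) (hv : ∀ m, 0 < v m) (hc : ∀ m, 0 < c m)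
    (S1 S2 : Set (Fin M → ℝ))
    (hS1 : S1 = {b | Real.sqrt D / K * ∑ m, |Km m * v m - c m * b m| ≤ R ∧
        ∀ m, 0 ≤ b m ∧ b m ≤ Real.sqrt P0})
    (hS2 : S2 = {b | Real.sqrt D / K * ∑ m, (Km m * v m - c m * b m) ≤ R ∧
        ∀ m, 0 ≤ b m ∧ b m ≤ min (Real.sqrt P0) (Km m * v m / c m)})
    (hne1 : S1.Nonempty) (hne2 : S2.Nonempty) :
    sInf ((fun b : Fin M → ℝ => ∑ m, (b m) ^ 2) '' S1) =
      sInf ((fun b : Fin M → ℝ => ∑ m, (b m) ^ 2) '' S2) :=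
  stmt_6_general D K R P0 hK Km v c hKm hv hc S1 S2 hS1 hS2 hne2
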